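/- arXiv:2309.03068 — 4 statements merged into one kernel-verified Lean document; each statement's English description precedes it below -/
import Mathlib

section
/- Let μ be a probability measure on B(0,1) ⊂ ℝ^d, C ≥ 1, s ∈ (0,d), ε ∈ (0,1/2]. If μ(B(x,r)) ≤ C r^s for all x ∈ ℝ^d and all r ∈ [δ, δ^ε], then for all sufficiently small δ > 0, the s-energy of μ at scale δ satisfies I_s^δ(μ) ≤ C δ^{-dε}. -/
/-!
Write `f = μ * P_δ`. Since `0 ≤ P_δ ≤ δ^{-d} 1_{B(0,δ)}`, the density satisfies
`f(y) ≤ δ^{-d} μ(B(y,δ)) ≤ C δ^{s-d}`, and its mass on a set `B` is at most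
`|B(0,1)| μ(B_δ)`, `B_δ` the closed `δ`-neighbourhood of `B`. Hence
`I_s^δ(μ) ≤ |B(0,1)| sup_x ∫ f(y) |x-y|^{-s} dy`, and the potential splits into three ranges:
* `|x - y| < δ`: `f ≤ C δ^{s-d}` and `∫_{B(0,δ)} |y|^{-s} = δ^{d-s} ∫_{B(0,1)} |y|^{-s}`
  (finite as `s < d`) give `O(C)`;
* `2^k δ ≤ |x - y| < 2^{k+1} δ` for the `n ≤ log₂(1/δ)` dyadic scales below `δ^ε`:
  the Frostman bound `μ(B(x, 2^{k+1}δ + δ)) ≤ C (3 · 2^k δ)^s` gives `O(C)` for each;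
* `|x - y| ≥ 2^n δ > δ^ε / 4`: the kernel is `O(δ^{-εs})` and `f` has mass `O(1)`.
So `I_s^δ(μ) = O(C log(1/δ) + δ^{-εs})`, which is below `C δ^{-dε}` for small `δ` as `s < d`.
-/

open MeasureTheory Metric Set ENNReal Module Finset Filter Topology

lemma measurable_of_norm_le_imp_le {E : Type*} [NormedAddCommGroup E] [NormedSpace ℝ E]
    [MeasurableSpace E] [BorelSpace E] {f : E → ℝ}
    (hf : ∀ x y : E, ‖x‖ ≤ ‖y‖ → f y ≤ f x) : Measurable f := by
  rcases subsingleton_or_nontrivial E with hE | hE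
  · exact Subsingleton.measurable
  obtain ⟨e, he⟩ := exists_norm_eq E zero_le_one
  have hnorm : ∀ t : ℝ, ‖max t 0 • e‖ = max t 0 := fun t => by
    rw [norm_smul, he, mul_one, Real.norm_of_nonneg (le_max_right t 0)]
  have hfe : f = (fun t => f (max t 0 • e)) ∘ norm := by
    funext x
    have h := hnorm ‖x‖
    simp only [Function.comp_apply, max_eq_left (norm_nonneg x)] at h ⊢
    exact le_antisymm (hf _ _ h.le) (hf _ _ h.ge)
  have hanti : Antitone fun t : ℝ => f (max t 0 • e) := fun a b hab =>
    hf _ _ (by rw [hnorm, hnorm]; exact max_le_max hab le_rfl)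
  rw [hfe]
  exact hanti.measurable.comp measurable_norm

lemma ofReal_integral_le_lintegral_ofReal {α : Type*} [MeasurableSpace α] {μ : Measure α}
    {f : α → ℝ} (hf : 0 ≤ f) :
    ENNReal.ofReal (∫ a, f a ∂μ) ≤ ∫⁻ a, ENNReal.ofReal (f a) ∂μ :=
  calc ENNReal.ofReal (∫ a, f a ∂μ) ≤ ‖∫ a, f a ∂μ‖ₑ :=
        Real.enorm_eq_ofReal_abs _ ▸ ENNReal.ofReal_le_ofReal (le_abs_self _)
    _ ≤ ∫⁻ a, ‖f a‖ₑ ∂μ := enorm_integral_le_lintegral_enorm f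
    _ = ∫⁻ a, ENNReal.ofReal (f a) ∂μ := by simp_rw [Real.enorm_eq_ofReal (hf _)]

lemma ofReal_integral_integral_mul_mul_le {α : Type*} [MeasurableSpace α] {μ : Measure α}
    {f : α → ℝ} {F : α → ℝ≥0∞} {k : α → α → ℝ} (hf : 0 ≤ f)
    (hk : ∀ x y, 0 ≤ k x y) (hfF : ∀ x, ENNReal.ofReal (f x) ≤ F x) :
    ENNReal.ofReal (∫ x, ∫ y, f x * f y * k x y ∂μ ∂μ) ≤
      ∫⁻ x, ∫⁻ y, F x * F y * ENNReal.ofReal (k x y) ∂μ ∂μ := by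
  have hprod : ∀ x y, 0 ≤ f x * f y * k x y := fun x y =>
    mul_nonneg (mul_nonneg (hf x) (hf y)) (hk x y)
  calc ENNReal.ofReal (∫ x, ∫ y, f x * f y * k x y ∂μ ∂μ)
      ≤ ∫⁻ x, ENNReal.ofReal (∫ y, f x * f y * k x y ∂μ) ∂μ :=
        ofReal_integral_le_lintegral_ofReal fun x => integral_nonneg (hprod x)
    _ ≤ ∫⁻ x, ∫⁻ y, ENNReal.ofReal (f x * f y * k x y) ∂μ ∂μ :=
        lintegral_mono fun x => ofReal_integral_le_lintegral_ofReal (hprod x)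
    _ ≤ ∫⁻ x, ∫⁻ y, F x * F y * ENNReal.ofReal (k x y) ∂μ ∂μ :=
        lintegral_mono fun x => lintegral_mono fun y => by
          rw [ENNReal.ofReal_mul (mul_nonneg (hf x) (hf y)), ENNReal.ofReal_mul (hf x)]
          gcongr <;> apply hfF

lemma lintegral_lintegral_mul_mul_le {α : Type*} [MeasurableSpace α] {μ : Measure α}
    {F : α → ℝ≥0∞} {K : α → α → ℝ≥0∞} {B : ℝ≥0∞} (hF : Measurable F)
    (hK : ∀ x, Measurable (K x)) (hpot : ∀ x, ∫⁻ y, F y * K x y ∂μ ≤ B) :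
    ∫⁻ x, ∫⁻ y, F x * F y * K x y ∂μ ∂μ ≤ (∫⁻ x, F x ∂μ) * B :=
  calc ∫⁻ x, ∫⁻ y, F x * F y * K x y ∂μ ∂μ
      = ∫⁻ x, F x * ∫⁻ y, F y * K x y ∂μ ∂μ := by
        simp_rw [mul_assoc]
        exact lintegral_congr fun x => lintegral_const_mul _ (hF.mul (hK x))
    _ ≤ ∫⁻ x, F x * B ∂μ := lintegral_mono fun x => by gcongr; exact hpot x
    _ = (∫⁻ x, F x ∂μ) * B := lintegral_mul_const _ hF

lemma tendsto_rpow_nhdsGT_zero {e : ℝ} (he : 0 < e) :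
    Tendsto (fun δ : ℝ => δ ^ e) (𝓝[>] 0) (𝓝 0) := by
  simpa [Real.zero_rpow he.ne'] using
    (Real.continuousAt_rpow_const 0 e (Or.inr he.le)).tendsto.mono_left nhdsWithin_le_nhds

lemma eventually_add_mul_log_add_mul_rpow_le (A B D : ℝ) {t e : ℝ} (he : 0 < e)
    (hte : t < e) :
    ∀ᶠ δ in 𝓝[>] (0 : ℝ), A + B * Real.log δ⁻¹ + D * δ ^ (-t) ≤ δ ^ (-e) := by
  have hlim : Tendsto (fun δ : ℝ => A * δ ^ e - B * (Real.log δ * δ ^ e) + D * δ ^ (e - t))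
      (𝓝[>] 0) (𝓝 0) := by
    simpa using (((tendsto_rpow_nhdsGT_zero he).const_mul A).sub
      ((tendsto_log_mul_rpow_nhdsGT_zero he).const_mul B)).add
      ((tendsto_rpow_nhdsGT_zero (sub_pos.2 hte)).const_mul D)
  filter_upwards [hlim.eventually_lt_const one_pos, self_mem_nhdsWithin] with δ hlt hδ
  have hmul : (A + B * Real.log δ⁻¹ + D * δ ^ (-t)) * δ ^ e ≤ 1 := by
    refine (le_of_eq ?_).trans hlt.le
    rw [Real.log_inv, sub_eq_neg_add e t, Real.rpow_add hδ]
    ring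
  rwa [Real.rpow_neg hδ.le e, ← mul_one (δ ^ e)⁻¹,
    le_inv_mul_iff₀' (Real.rpow_pos_of_pos hδ e)]

lemma eventually_two_mul_le_rpow {ε : ℝ} (hε : ε < 1) :
    ∀ᶠ δ in 𝓝[>] (0 : ℝ), 2 * δ ≤ δ ^ ε := by
  filter_upwards [(tendsto_rpow_nhdsGT_zero (sub_pos.2 hε)).eventually_le_const
    (by norm_num : (0 : ℝ) < 1 / 2), self_mem_nhdsWithin] with δ hle hδ
  calc 2 * δ = 2 * δ ^ (1 - ε) * δ ^ ε := by
        rw [mul_assoc, ← Real.rpow_add hδ, sub_add_cancel, Real.rpow_one]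
    _ ≤ δ ^ ε := by nlinarith [Real.rpow_pos_of_pos hδ ε]

lemma exists_pow_two_mul_add_le {δ R : ℝ} (hδ : 0 < δ) (h2δ : 2 * δ ≤ R) :
    ∃ n : ℕ, 2 ^ n * δ + δ ≤ R ∧ R < 4 * (2 ^ n * δ) := by
  obtain ⟨n, h1, h2⟩ := exists_nat_pow_near (x := R / (2 * δ)) (y := (2 : ℝ))
    ((one_le_div (by positivity)).2 h2δ) one_lt_two
  rw [le_div_iff₀ (by positivity)] at h1
  rw [div_lt_iff₀ (by positivity), pow_succ] at h2
  exact ⟨n, by nlinarith [one_le_pow₀ (one_le_two : (1 : ℝ) ≤ 2) (n := n)], by linarith⟩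

section Dyadic

variable {E : Type*} [SeminormedAddCommGroup E] {s r δ : ℝ}

lemma indicator_compl_ball_rpow_neg_le (hs : 0 ≤ s) (hr : 0 < r) (x y : E) :
    (ball x r)ᶜ.indicator (fun y => ENNReal.ofReal (‖x - y‖ ^ (-s))) y ≤
      ENNReal.ofReal (r ^ (-s)) := by
  by_cases hy : y ∈ ball x r
  · simp [hy]
  · rw [indicator_of_mem (mem_compl hy)]
    rw [mem_ball, dist_comm, dist_eq_norm, not_lt] at hy
    exact ENNReal.ofReal_le_ofReal (Real.rpow_le_rpow_of_nonpos hr hy (neg_nonpos.2 hs))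

lemma indicator_compl_ball_rpow_neg_le_add (hs : 0 ≤ s) (hr : 0 < r) (x y : E) :
    (ball x r)ᶜ.indicator (fun y => ENNReal.ofReal (‖x - y‖ ^ (-s))) y ≤
      (ball x (2 * r)).indicator (fun _ => ENNReal.ofReal (r ^ (-s))) y +
        (ball x (2 * r))ᶜ.indicator (fun y => ENNReal.ofReal (‖x - y‖ ^ (-s))) y := by
  by_cases hy : y ∈ ball x (2 * r)
  · rw [indicator_of_mem hy, indicator_of_notMem (notMem_compl_iff.2 hy), add_zero]
    exact indicator_compl_ball_rpow_neg_le hs hr x y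
  · have hy' : y ∉ ball x r := fun h => hy (ball_subset_ball (by linarith) h)
    rw [indicator_of_notMem hy, zero_add, indicator_of_mem (mem_compl hy),
      indicator_of_mem (mem_compl hy')]

lemma ofReal_norm_sub_rpow_neg_le_sum (hs : 0 ≤ s) (hδ : 0 < δ) (x y : E) (n : ℕ) :
    ENNReal.ofReal (‖x - y‖ ^ (-s)) ≤
      (ball x δ).indicator (fun y => ENNReal.ofReal (‖x - y‖ ^ (-s))) y +
        ∑ k ∈ range n, (ball x (2 * (2 ^ k * δ))).indicator
          (fun _ => ENNReal.ofReal ((2 ^ k * δ) ^ (-s))) y +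
        (ball x (2 ^ n * δ))ᶜ.indicator (fun y => ENNReal.ofReal (‖x - y‖ ^ (-s))) y := by
  induction n with
  | zero =>
    simp only [range_zero, sum_empty, add_zero, pow_zero, one_mul]
    exact (indicator_self_add_compl_apply (ball x δ)
      (fun y => ENNReal.ofReal (‖x - y‖ ^ (-s))) y).ge
  | succ n ih =>
    have htail := indicator_compl_ball_rpow_neg_le_add hs (r := 2 ^ n * δ) (by positivity) x y
    rw [sum_range_succ, pow_succ' 2 n, mul_assoc]
    exact ih.trans ((add_le_add le_rfl htail).trans_eq (by ring))

lemma lintegral_mul_rpow_neg_le_dyadic [MeasurableSpace E] [OpensMeasurableSpace E]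
    {ν : Measure E} {F : E → ℝ≥0∞} (hF : Measurable F) (hs : 0 ≤ s) (hδ : 0 < δ)
    (x : E) (n : ℕ) :
    ∫⁻ y, F y * ENNReal.ofReal (‖x - y‖ ^ (-s)) ∂ν ≤
      ∫⁻ y in ball x δ, F y * ENNReal.ofReal (‖x - y‖ ^ (-s)) ∂ν +
        ∑ k ∈ range n,
          ENNReal.ofReal ((2 ^ k * δ) ^ (-s)) * ∫⁻ y in ball x (2 * (2 ^ k * δ)), F y ∂ν +
        ENNReal.ofReal ((2 ^ n * δ) ^ (-s)) * ∫⁻ y, F y ∂ν := by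
  have hpoint : ∀ y, F y * ENNReal.ofReal (‖x - y‖ ^ (-s)) ≤
      (ball x δ).indicator (fun y => F y * ENNReal.ofReal (‖x - y‖ ^ (-s))) y +
        ∑ k ∈ range n,
          ENNReal.ofReal ((2 ^ k * δ) ^ (-s)) * (ball x (2 * (2 ^ k * δ))).indicator F y +
        ENNReal.ofReal ((2 ^ n * δ) ^ (-s)) * F y := fun y => by
    have hswap : ∀ (c : ℝ≥0∞) (t : Set E),
        F y * t.indicator (fun _ => c) y = c * t.indicator F y := fun c t => by
      by_cases hy : y ∈ t <;> simp [hy, mul_comm]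
    calc F y * ENNReal.ofReal (‖x - y‖ ^ (-s))
        ≤ F y * ((ball x δ).indicator (fun y => ENNReal.ofReal (‖x - y‖ ^ (-s))) y +
          ∑ k ∈ range n, (ball x (2 * (2 ^ k * δ))).indicator
            (fun _ => ENNReal.ofReal ((2 ^ k * δ) ^ (-s))) y +
          ENNReal.ofReal ((2 ^ n * δ) ^ (-s))) := by
          gcongr
          exact (ofReal_norm_sub_rpow_neg_le_sum hs hδ x y n).trans
            (add_le_add le_rfl (indicator_compl_ball_rpow_neg_le hs (by positivity) x y))
      _ = _ := by
          rw [mul_add, mul_add, mul_sum, indicator_mul_right, mul_comm (F y) (ENNReal.ofReal _)]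
          simp only [hswap]
  calc ∫⁻ y, F y * ENNReal.ofReal (‖x - y‖ ^ (-s)) ∂ν ≤ _ := lintegral_mono hpoint
    _ = _ := by
      rw [lintegral_add_right _ (hF.const_mul _), lintegral_add_right _
          (Finset.measurable_sum _ fun k _ => (hF.indicator measurableSet_ball).const_mul _),
        lintegral_finsetSum _ fun k _ => (hF.indicator measurableSet_ball).const_mul _,
        lintegral_indicator measurableSet_ball, lintegral_const_mul _ hF]
      simp_rw [lintegral_const_mul _ (hF.indicator measurableSet_ball),
        lintegral_indicator measurableSet_ball]

end Dyadic

section RieszKernel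

variable {E : Type*} [NormedAddCommGroup E] [NormedSpace ℝ E] [FiniteDimensional ℝ E]
  [MeasurableSpace E] [BorelSpace E] {ν : Measure E} [ν.IsAddHaarMeasure] {δ : ℝ}

lemma lintegral_eq_ofReal_pow_finrank_mul_lintegral_comp_smul (hδ : 0 < δ)
    (g : E → ℝ≥0∞) :
    ∫⁻ z, g z ∂ν = ENNReal.ofReal (δ ^ finrank ℝ E) * ∫⁻ w, g (δ • w) ∂ν := by
  have hmap : ∫⁻ w, g (δ • w) ∂ν = ENNReal.ofReal |(δ ^ finrank ℝ E)⁻¹| * ∫⁻ z, g z ∂ν :=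
    calc ∫⁻ w, g (δ • w) ∂ν = ∫⁻ z, g z ∂(ν.map (δ • ·)) :=
          (lintegral_map_equiv g (Homeomorph.smulOfNeZero δ hδ.ne').toMeasurableEquiv).symm
      _ = _ := by rw [ν.map_addHaar_smul hδ.ne', lintegral_smul_measure, smul_eq_mul]
  rw [hmap, ← mul_assoc, ← ENNReal.ofReal_mul (by positivity),
    abs_of_pos (by positivity : 0 < (δ ^ finrank ℝ E)⁻¹),
    mul_inv_cancel₀ (by positivity), ENNReal.ofReal_one, one_mul]

lemma setLIntegral_ball_rpow_neg_eq (hδ : 0 < δ) (x : E) (s : ℝ) :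
    ∫⁻ y in ball x δ, ENNReal.ofReal (‖x - y‖ ^ (-s)) ∂ν =
      ENNReal.ofReal (δ ^ ((finrank ℝ E : ℝ) - s)) *
        ∫⁻ y in ball 0 1, ENNReal.ofReal (‖y‖ ^ (-s)) ∂ν := by
  set h : E → ℝ≥0∞ := fun w => ENNReal.ofReal (‖w‖ ^ (-s))
  have htrans : ∀ y, (ball x δ).indicator (fun y => ENNReal.ofReal (‖x - y‖ ^ (-s))) y =
      (ball 0 δ).indicator h (y - x) := fun y => by
    simp only [indicator, mem_ball, dist_eq_norm, sub_zero, h, norm_sub_rev x y]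
  have hscale : ∀ w, (ball 0 δ).indicator h (δ • w) =
      ENNReal.ofReal (δ ^ (-s)) * (ball 0 1).indicator h w := fun w => by
    by_cases hw : w ∈ ball (0 : E) 1
    · have hδw : δ • w ∈ ball (0 : E) δ := by
        rw [mem_ball_zero_iff, norm_smul, Real.norm_of_nonneg hδ.le]
        exact mul_lt_of_lt_one_right hδ (mem_ball_zero_iff.1 hw)
      rw [indicator_of_mem hw, indicator_of_mem hδw, ← ENNReal.ofReal_mul (by positivity)]
      simp only [h]
      rw [norm_smul, Real.norm_of_nonneg hδ.le, Real.mul_rpow hδ.le (norm_nonneg w)]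
    · have hδw : δ • w ∉ ball (0 : E) δ := by
        rw [mem_ball_zero_iff, norm_smul, Real.norm_of_nonneg hδ.le, not_lt]
        exact le_mul_of_one_le_right hδ.le (not_lt.1 (mt mem_ball_zero_iff.2 hw))
      rw [indicator_of_notMem hw, indicator_of_notMem hδw, mul_zero]
  rw [← lintegral_indicator measurableSet_ball, ← lintegral_indicator measurableSet_ball]
  simp_rw [htrans]
  rw [lintegral_sub_right_eq_self _ x,
    lintegral_eq_ofReal_pow_finrank_mul_lintegral_comp_smul hδ]
  simp_rw [hscale]
  rw [lintegral_const_mul' _ _ ENNReal.ofReal_ne_top, ← mul_assoc,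
    ← ENNReal.ofReal_mul (by positivity), ← Real.rpow_natCast, ← Real.rpow_add hδ,
    sub_eq_add_neg]

lemma setLIntegral_ball_rpow_neg_lt_top {s : ℝ} (hs : 0 ≤ s) (hsd : s < finrank ℝ E) :
    ∫⁻ y in ball (0 : E) 1, ENNReal.ofReal (‖y‖ ^ (-s)) ∂ν < ⊤ := by
  have hdim : 1 ≤ finrank ℝ E := by
    have : (0 : ℝ) < finrank ℝ E := hs.trans_lt hsd
    exact_mod_cast this
  have hint : IntegrableOn (fun y : E => ‖y‖ ^ (-s)) (ball 0 1) ν :=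
    integrableOn_ball_of_norm_le_rpow (C := 1) hdim hsd
      (ae_of_all _ fun y => by
        rw [one_mul, Real.norm_of_nonneg (Real.rpow_nonneg (norm_nonneg y) _)])
      (measurable_norm.pow_const _).aestronglyMeasurable
  exact (hasFiniteIntegral_iff_ofReal
    (ae_of_all _ fun y => Real.rpow_nonneg (norm_nonneg y) _)).1 hint.2

end RieszKernel

section Mollifier

variable {E : Type*} [NormedAddCommGroup E] [NormedSpace ℝ E]

noncomputable def scaledBump (P : E → ℝ) (δ : ℝ) (w : E) : ℝ :=
  δ ^ (-(finrank ℝ E : ℝ)) * P (δ⁻¹ • w)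

variable {P : E → ℝ} {δ : ℝ}

lemma ofReal_scaledBump_le_indicator
    (hP : ∀ x, P x ≤ (closedBall (0 : E) 1).indicator 1 x) (hδ : 0 < δ) (y z : E) :
    ENNReal.ofReal (scaledBump P δ (y - z)) ≤
      (closedBall y δ).indicator (fun _ => ENNReal.ofReal (δ ^ (-(finrank ℝ E : ℝ)))) z := by
  by_cases hz : z ∈ closedBall y δ
  · rw [indicator_of_mem hz]
    exact ENNReal.ofReal_le_ofReal (mul_le_of_le_one_right (by positivity)
      ((hP _).trans (indicator_le_self' (fun _ _ => zero_le_one) _)))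
  · rw [indicator_of_notMem hz, nonpos_iff_eq_zero, ENNReal.ofReal_eq_zero]
    have hout : δ⁻¹ • (y - z) ∉ closedBall (0 : E) 1 := by
      rw [mem_closedBall_zero_iff, norm_smul, norm_inv, Real.norm_of_nonneg hδ.le,
        ← dist_eq_norm, inv_mul_le_iff₀ hδ, mul_one]
      rwa [mem_closedBall, dist_comm] at hz
    have := hP (δ⁻¹ • (y - z))
    rw [indicator_of_notMem hout] at this
    exact mul_nonpos_of_nonneg_of_nonpos (by positivity) this

variable [MeasurableSpace E] [BorelSpace E] {μ ν : Measure E}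

/-- The density of `μ * P_δ`, valued in `ℝ≥0∞` so that no integrability side conditions arise. -/
noncomputable def mollifiedDensity (P : E → ℝ) (δ : ℝ) (μ : Measure E) (y : E) : ℝ≥0∞ :=
  ∫⁻ z, ENNReal.ofReal (scaledBump P δ (y - z)) ∂μ

lemma mollifiedDensity_le (hP : ∀ x, P x ≤ (closedBall (0 : E) 1).indicator 1 x)
    (hδ : 0 < δ) (y : E) :
    mollifiedDensity P δ μ y ≤
      ENNReal.ofReal (δ ^ (-(finrank ℝ E : ℝ))) * μ (closedBall y δ) :=
  (lintegral_mono (ofReal_scaledBump_le_indicator hP hδ y)).trans_eq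
    (lintegral_indicator_const measurableSet_closedBall _)

variable [FiniteDimensional ℝ E]

lemma measurable_ofReal_scaledBump_sub (hPm : Measurable P) :
    Measurable fun p : E × E => ENNReal.ofReal (scaledBump P δ (p.1 - p.2)) := by
  unfold scaledBump; fun_prop

lemma measurable_mollifiedDensity [SFinite μ] (hPm : Measurable P) :
    Measurable (mollifiedDensity P δ μ) :=
  (measurable_ofReal_scaledBump_sub hPm).lintegral_prod_right'

variable [ν.IsAddHaarMeasure]

lemma lintegral_ofReal_scaledBump_le (hP : ∀ x, P x ≤ (closedBall (0 : E) 1).indicator 1 x)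
    (hδ : 0 < δ) (z : E) :
    ∫⁻ y, ENNReal.ofReal (scaledBump P δ (y - z)) ∂ν ≤ ν (ball 0 1) :=
  calc ∫⁻ y, ENNReal.ofReal (scaledBump P δ (y - z)) ∂ν
      ≤ ∫⁻ y, (closedBall z δ).indicator
          (fun _ => ENNReal.ofReal (δ ^ (-(finrank ℝ E : ℝ)))) y ∂ν :=
        lintegral_mono fun y => by
          refine (ofReal_scaledBump_le_indicator hP hδ y z).trans_eq ?_
          by_cases h : y ∈ closedBall z δ
          · rw [indicator_of_mem h, indicator_of_mem (mem_closedBall_comm.1 h)]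
          · rw [indicator_of_notMem h, indicator_of_notMem (mt mem_closedBall_comm.1 h)]
    _ = ν (ball 0 1) := by
      rw [lintegral_indicator_const measurableSet_closedBall, ν.addHaar_closedBall z hδ.le,
        ← mul_assoc, ← ENNReal.ofReal_mul (by positivity), ← Real.rpow_natCast,
        ← Real.rpow_add hδ, neg_add_cancel, Real.rpow_zero, ENNReal.ofReal_one, one_mul]

lemma setLIntegral_mollifiedDensity_le [SFinite μ]
    (hPm : Measurable P) (hP : ∀ x, P x ≤ (closedBall (0 : E) 1).indicator 1 x) (hδ : 0 < δ)
    {B : Set E} (hB : MeasurableSet B) :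
    ∫⁻ y in B, mollifiedDensity P δ μ y ∂ν ≤ ν (ball 0 1) * μ (cthickening δ B) := by
  have hzero : ∀ z ∉ cthickening δ B, ∀ y ∈ B,
      ENNReal.ofReal (scaledBump P δ (y - z)) = 0 := fun z hz y hy =>
    nonpos_iff_eq_zero.1 <| (ofReal_scaledBump_le_indicator hP hδ y z).trans
      (indicator_of_notMem (fun hyz => hz
        (mem_cthickening_of_dist_le z y δ B hy (mem_closedBall.1 hyz))) _).le
  have hinner : ∀ z, ∫⁻ y in B, ENNReal.ofReal (scaledBump P δ (y - z)) ∂ν ≤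
      (cthickening δ B).indicator (fun _ => ν (ball 0 1)) z := by
    intro z
    by_cases hz : z ∈ cthickening δ B
    · rw [indicator_of_mem hz]
      exact setLIntegral_le_lintegral _ _ |>.trans (lintegral_ofReal_scaledBump_le hP hδ z)
    · rw [indicator_of_notMem hz, setLIntegral_congr_fun hB (hzero z hz), lintegral_zero]
  calc ∫⁻ y in B, mollifiedDensity P δ μ y ∂ν
      = ∫⁻ z, ∫⁻ y in B, ENNReal.ofReal (scaledBump P δ (y - z)) ∂ν ∂μ :=
        lintegral_lintegral_swap (measurable_ofReal_scaledBump_sub hPm).aemeasurable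
    _ ≤ ∫⁻ z, (cthickening δ B).indicator (fun _ => ν (ball 0 1)) z ∂μ :=
        lintegral_mono hinner
    _ = ν (ball 0 1) * μ (cthickening δ B) :=
        lintegral_indicator_const isClosed_cthickening.measurableSet _

lemma lintegral_mollifiedDensity_le [IsProbabilityMeasure μ] (hPm : Measurable P)
    (hP : ∀ x, P x ≤ (closedBall (0 : E) 1).indicator 1 x) (hδ : 0 < δ) :
    ∫⁻ y, mollifiedDensity P δ μ y ∂ν ≤ ν (ball 0 1) := by
  simpa only [Measure.restrict_univ] using (setLIntegral_mollifiedDensity_le hPm hP hδ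
    MeasurableSet.univ).trans (mul_le_of_le_one_right' prob_le_one)

lemma setLIntegral_ball_mollifiedDensity_mul_rpow_neg_le
    (hP : ∀ x, P x ≤ (closedBall (0 : E) 1).indicator 1 x) (hδ : 0 < δ) {s C : ℝ}
    (hμ : ∀ y, μ (closedBall y δ) ≤ ENNReal.ofReal (C * δ ^ s)) (x : E) :
    ∫⁻ y in ball x δ, mollifiedDensity P δ μ y * ENNReal.ofReal (‖x - y‖ ^ (-s)) ∂ν ≤
      ENNReal.ofReal C * ∫⁻ y in ball 0 1, ENNReal.ofReal (‖y‖ ^ (-s)) ∂ν := by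
  set M := ENNReal.ofReal (C * δ ^ (s - finrank ℝ E))
  have hΦ : ∀ y, mollifiedDensity P δ μ y ≤ M := fun y =>
    calc mollifiedDensity P δ μ y
        ≤ ENNReal.ofReal (δ ^ (-(finrank ℝ E : ℝ))) * ENNReal.ofReal (C * δ ^ s) :=
          (mollifiedDensity_le hP hδ y).trans (by gcongr; exact hμ y)
      _ = M := by
          simp only [M]
          rw [← ENNReal.ofReal_mul (by positivity), sub_eq_add_neg, Real.rpow_add hδ]
          ring_nf
  calc ∫⁻ y in ball x δ, mollifiedDensity P δ μ y * ENNReal.ofReal (‖x - y‖ ^ (-s)) ∂ν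
      ≤ ∫⁻ y in ball x δ, M * ENNReal.ofReal (‖x - y‖ ^ (-s)) ∂ν :=
        lintegral_mono fun y => by gcongr; exact hΦ y
    _ = M * ENNReal.ofReal (δ ^ ((finrank ℝ E : ℝ) - s)) *
          ∫⁻ y in ball 0 1, ENNReal.ofReal (‖y‖ ^ (-s)) ∂ν := by
        rw [lintegral_const_mul' _ _ ENNReal.ofReal_ne_top, setLIntegral_ball_rpow_neg_eq hδ,
          mul_assoc]
    _ = ENNReal.ofReal C * ∫⁻ y in ball 0 1, ENNReal.ofReal (‖y‖ ^ (-s)) ∂ν := by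
        rw [← ENNReal.ofReal_mul' (by positivity), mul_assoc, ← Real.rpow_add hδ,
          sub_add_sub_cancel', sub_self, Real.rpow_zero, mul_one]

lemma ofReal_rpow_neg_mul_setLIntegral_mollifiedDensity_le [IsProbabilityMeasure μ]
    (hPm : Measurable P) (hP : ∀ x, P x ≤ (closedBall (0 : E) 1).indicator 1 x) (hδ : 0 < δ)
    {s C R r : ℝ} (hs : 0 ≤ s) (hC : 0 ≤ C)
    (hFrost : ∀ x r, r ∈ Icc δ R → μ (closedBall x r) ≤ ENNReal.ofReal (C * r ^ s))
    (hδr : δ ≤ r) (hrR : δ + 2 * r ≤ R) (x : E) :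
    ENNReal.ofReal (r ^ (-s)) * ∫⁻ y in ball x (2 * r), mollifiedDensity P δ μ y ∂ν ≤
      ν (ball 0 1) * ENNReal.ofReal (C * 3 ^ s) := by
  have hr : 0 < r := hδ.trans_le hδr
  calc ENNReal.ofReal (r ^ (-s)) * ∫⁻ y in ball x (2 * r), mollifiedDensity P δ μ y ∂ν
      ≤ ENNReal.ofReal (r ^ (-s)) * (ν (ball 0 1) * ENNReal.ofReal (C * (δ + 2 * r) ^ s)) := by
        gcongr
        refine (setLIntegral_mollifiedDensity_le hPm hP hδ measurableSet_ball).trans ?_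
        rw [cthickening_ball hδ.le (by positivity)]
        gcongr
        exact hFrost x _ ⟨by linarith, hrR⟩
    _ = ν (ball 0 1) * ENNReal.ofReal (r ^ (-s) * (C * (δ + 2 * r) ^ s)) := by
        rw [ENNReal.ofReal_mul (p := r ^ (-s)) (by positivity)]; ring
    _ ≤ ν (ball 0 1) * ENNReal.ofReal (C * 3 ^ s) := by
        gcongr ν (ball 0 1) * ENNReal.ofReal ?_
        calc r ^ (-s) * (C * (δ + 2 * r) ^ s) ≤ r ^ (-s) * (C * (3 * r) ^ s) := by
              gcongr; linarith
          _ = C * 3 ^ s := by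
              rw [Real.mul_rpow (by norm_num) hr.le, Real.rpow_neg hr.le]
              field_simp

lemma lintegral_mollifiedDensity_mul_rpow_neg_le [IsProbabilityMeasure μ] (hPm : Measurable P)
    (hP : ∀ x, P x ≤ (closedBall (0 : E) 1).indicator 1 x) (hδ : 0 < δ) {s C R : ℝ}
    (hs : 0 ≤ s) (hC : 0 ≤ C)
    (hFrost : ∀ x r, r ∈ Icc δ R → μ (closedBall x r) ≤ ENNReal.ofReal (C * r ^ s))
    {n : ℕ} (hn : 2 ^ n * δ + δ ≤ R) (x : E) :
    ∫⁻ y, mollifiedDensity P δ μ y * ENNReal.ofReal (‖x - y‖ ^ (-s)) ∂ν ≤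
      ENNReal.ofReal C * ∫⁻ y in ball 0 1, ENNReal.ofReal (‖y‖ ^ (-s)) ∂ν +
        ν (ball 0 1) * ENNReal.ofReal (n * (C * 3 ^ s) + (2 ^ n * δ) ^ (-s)) := by
  have hshell : ∀ k ∈ range n, ENNReal.ofReal ((2 ^ k * δ) ^ (-s)) *
      ∫⁻ y in ball x (2 * (2 ^ k * δ)), mollifiedDensity P δ μ y ∂ν ≤
        ν (ball 0 1) * ENNReal.ofReal (C * 3 ^ s) := fun k hk => by
    have hkn : (2 : ℝ) ^ (k + 1) ≤ 2 ^ n := pow_le_pow_right₀ one_le_two (mem_range.1 hk)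
    refine ofReal_rpow_neg_mul_setLIntegral_mollifiedDensity_le hPm hP hδ hs hC hFrost ?_ ?_ x
    · exact le_mul_of_one_le_left hδ.le (one_le_pow₀ one_le_two)
    · rw [pow_succ'] at hkn; nlinarith
  have hδR : δ ∈ Icc δ R := ⟨le_rfl, by linarith [show 0 < 2 ^ n * δ by positivity]⟩
  calc ∫⁻ y, mollifiedDensity P δ μ y * ENNReal.ofReal (‖x - y‖ ^ (-s)) ∂ν
      ≤ _ := lintegral_mul_rpow_neg_le_dyadic (measurable_mollifiedDensity hPm) hs hδ x n
    _ ≤ ENNReal.ofReal C * ∫⁻ y in ball 0 1, ENNReal.ofReal (‖y‖ ^ (-s)) ∂ν +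
          ∑ k ∈ range n, ν (ball 0 1) * ENNReal.ofReal (C * 3 ^ s) +
          ENNReal.ofReal ((2 ^ n * δ) ^ (-s)) * ν (ball 0 1) := by
        refine add_le_add (add_le_add ?_ (sum_le_sum hshell)) ?_
        · exact setLIntegral_ball_mollifiedDensity_mul_rpow_neg_le hP hδ
            (fun y => hFrost y δ hδR) x
        · gcongr; exact lintegral_mollifiedDensity_le hPm hP hδ
    _ = _ := by
        rw [sum_const, card_range, nsmul_eq_mul,
          ENNReal.ofReal_add (by positivity) (by positivity),
          ENNReal.ofReal_mul (p := n) (by positivity), ENNReal.ofReal_natCast]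
        ring

lemma lintegral_mollifiedDensity_mul_rpow_neg_le_log [IsProbabilityMeasure μ]
    (hPm : Measurable P) (hP : ∀ x, P x ≤ (closedBall (0 : E) 1).indicator 1 x) (hδ : 0 < δ)
    {s C R : ℝ} (hs : 0 ≤ s) (hC : 0 ≤ C)
    (hFrost : ∀ x r, r ∈ Icc δ R → μ (closedBall x r) ≤ ENNReal.ofReal (C * r ^ s))
    (h2δ : 2 * δ ≤ R) (hR : R ≤ 1) (x : E) :
    ∫⁻ y, mollifiedDensity P δ μ y * ENNReal.ofReal (‖x - y‖ ^ (-s)) ∂ν ≤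
      ENNReal.ofReal C * ∫⁻ y in ball 0 1, ENNReal.ofReal (‖y‖ ^ (-s)) ∂ν +
        ν (ball 0 1) * ENNReal.ofReal
          (Real.log δ⁻¹ / Real.log 2 * (C * 3 ^ s) + 4 ^ s * R ^ (-s)) := by
  obtain ⟨n, hn, hRn⟩ := exists_pow_two_mul_add_le hδ h2δ
  refine (lintegral_mollifiedDensity_mul_rpow_neg_le hPm hP hδ hs hC hFrost hn x).trans ?_
  gcongr _ + ν (ball 0 1) * ENNReal.ofReal (?_ * _ + ?_)
  · rw [le_div_iff₀ (Real.log_pos one_lt_two), ← Real.log_pow]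
    refine Real.log_le_log (by positivity) ?_
    rw [← one_div, le_div_iff₀ hδ]
    linarith
  · calc (2 ^ n * δ) ^ (-s) ≤ (R / 4) ^ (-s) :=
          Real.rpow_le_rpow_of_nonpos (by linarith) (by linarith) (neg_nonpos.2 hs)
      _ = 4 ^ s * R ^ (-s) := by
          rw [Real.div_rpow (by linarith) (by norm_num),
            Real.rpow_neg (by norm_num : (0 : ℝ) ≤ 4), div_inv_eq_mul, mul_comm]

lemma lintegral_lintegral_mollifiedDensity_mul_rpow_neg_le [IsProbabilityMeasure μ]
    (hPm : Measurable P) (hP : ∀ x, P x ≤ (closedBall (0 : E) 1).indicator 1 x) (hδ : 0 < δ)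
    {s C R : ℝ} (hs : 0 ≤ s) (hsd : s < finrank ℝ E) (hC : 1 ≤ C)
    (hFrost : ∀ x r, r ∈ Icc δ R → μ (closedBall x r) ≤ ENNReal.ofReal (C * r ^ s))
    (h2δ : 2 * δ ≤ R) (hR : R ≤ 1) :
    ∫⁻ x, ∫⁻ y, mollifiedDensity P δ μ x * mollifiedDensity P δ μ y *
        ENNReal.ofReal (‖x - y‖ ^ (-s)) ∂ν ∂ν ≤
      ENNReal.ofReal (C * (ν.real (ball 0 1) *
          (∫⁻ y in ball 0 1, ENNReal.ofReal (‖y‖ ^ (-s)) ∂ν).toReal +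
        ν.real (ball 0 1) ^ 2 * 3 ^ s / Real.log 2 * Real.log δ⁻¹ +
        ν.real (ball 0 1) ^ 2 * 4 ^ s * R ^ (-s))) := by
  set a := ν.real (ball (0 : E) 1)
  set c := ∫⁻ y in ball (0 : E) 1, ENNReal.ofReal (‖y‖ ^ (-s)) ∂ν
  set X := Real.log δ⁻¹ / Real.log 2 * (C * 3 ^ s) + 4 ^ s * R ^ (-s)
  have ha : ENNReal.ofReal a = ν (ball 0 1) := ENNReal.ofReal_toReal measure_ball_lt_top.ne
  have hc : ENNReal.ofReal c.toReal = c :=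
    ENNReal.ofReal_toReal (setLIntegral_ball_rpow_neg_lt_top hs hsd).ne
  have ha0 : 0 ≤ a := measureReal_nonneg
  have hRs : 0 ≤ R ^ (-s) := Real.rpow_nonneg (by linarith) _
  have hX : 0 ≤ X := by
    have hlog : 0 ≤ Real.log δ⁻¹ := Real.log_nonneg (one_le_inv_iff₀.2 ⟨hδ, by linarith⟩)
    have : 0 ≤ C * 3 ^ s := mul_nonneg (by linarith) (by positivity)
    simp only [X]; positivity
  calc _ ≤ ν (ball 0 1) * (ENNReal.ofReal C * c + ν (ball 0 1) * ENNReal.ofReal X) :=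
        (lintegral_lintegral_mul_mul_le (measurable_mollifiedDensity hPm) (fun x => by fun_prop)
          (lintegral_mollifiedDensity_mul_rpow_neg_le_log hPm hP hδ hs (by linarith) hFrost
            h2δ hR)).trans (by gcongr; exact lintegral_mollifiedDensity_le hPm hP hδ)
    _ = ENNReal.ofReal (a * (C * c.toReal + a * X)) := by
        rw [ENNReal.ofReal_mul ha0, ENNReal.ofReal_add (by positivity) (mul_nonneg ha0 hX),
          ENNReal.ofReal_mul (by linarith), ENNReal.ofReal_mul ha0, ha, hc]
    _ ≤ _ := by
        refine ENNReal.ofReal_le_ofReal ?_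
        have hD : 0 ≤ a ^ 2 * 4 ^ s * R ^ (-s) := by positivity
        have hsplit : a * (C * c.toReal + a * X) = C * (a * c.toReal +
            a ^ 2 * 3 ^ s / Real.log 2 * Real.log δ⁻¹) + a ^ 2 * 4 ^ s * R ^ (-s) := by
          simp only [X]; ring
        rw [hsplit]
        nlinarith [mul_nonneg (sub_nonneg.2 hC) hD]

end Mollifier

theorem stmt3_general (d : ℕ) (C : ℝ) (hC : 1 ≤ C) (s : ℝ) (hs : 0 < s) (hsd : s < d)
    (ε : ℝ) (hε : 0 < ε) (hε' : ε ≤ 1 / 2)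
    (P : EuclideanSpace ℝ (Fin d) → ℝ)
    (hPdec : ∀ x y : EuclideanSpace ℝ (Fin d), ‖x‖ ≤ ‖y‖ → P y ≤ P x)
    (hPlow : ∀ x, Set.indicator (Metric.closedBall (0 : EuclideanSpace ℝ (Fin d)) (1 / 2)) 1 x ≤ P x)
    (hPupp : ∀ x, P x ≤ Set.indicator (Metric.closedBall (0 : EuclideanSpace ℝ (Fin d)) 1) 1 x) :
    ∃ δ₀ > (0:ℝ), ∀ δ : ℝ, 0 < δ → δ ≤ δ₀ →
      ∀ μ : Measure (EuclideanSpace ℝ (Fin d)), IsProbabilityMeasure μ →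
      μ (Metric.closedBall 0 1)ᶜ = 0 →
      (∀ (x : EuclideanSpace ℝ (Fin d)) (r : ℝ), r ∈ Set.Icc δ (δ ^ ε) →
        μ (Metric.closedBall x r) ≤ ENNReal.ofReal (C * r ^ s)) →
      (∫ x : EuclideanSpace ℝ (Fin d), ∫ y : EuclideanSpace ℝ (Fin d),
          (∫ z, δ ^ (-(d:ℝ)) * P (δ⁻¹ • (x - z)) ∂μ) *
          (∫ z, δ ^ (-(d:ℝ)) * P (δ⁻¹ • (y - z)) ∂μ) * ‖x - y‖ ^ (-s)) ≤
        C * δ ^ (-(d:ℝ) * ε) := by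
  have hdim : finrank ℝ (EuclideanSpace ℝ (Fin d)) = d := finrank_euclideanSpace_fin
  set a := volume.real (ball (0 : EuclideanSpace ℝ (Fin d)) 1)
  set b := (∫⁻ y in ball (0 : EuclideanSpace ℝ (Fin d)) 1, ENNReal.ofReal (‖y‖ ^ (-s))).toReal
  obtain ⟨δ₀, hδ₀, hsmall⟩ := (nhdsGT_basis_Ioc (0 : ℝ)).eventually_iff.1 <|
    (eventually_two_mul_le_rpow (by linarith : ε < 1)).and <|
      (eventually_nhdsWithin_of_eventually_nhds (eventually_lt_nhds one_pos)).and <|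
      eventually_add_mul_log_add_mul_rpow_le (a * b) (a ^ 2 * 3 ^ s / Real.log 2) (a ^ 2 * 4 ^ s)
        (t := ε * s) (mul_pos (hs.trans hsd) hε) (by nlinarith)
  refine ⟨δ₀, hδ₀, fun δ hδ hδδ₀ μ _ _ hFrost => ?_⟩
  obtain ⟨h2δ, hδ1, hsmall⟩ := hsmall ⟨hδ, hδδ₀⟩
  have hP0 : ∀ x, 0 ≤ P x := fun x =>
    (indicator_nonneg (fun _ _ => zero_le_one) x).trans (hPlow x)
  have hmoll : ∀ x, ENNReal.ofReal (∫ z, δ ^ (-(d:ℝ)) * P (δ⁻¹ • (x - z)) ∂μ) ≤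
      mollifiedDensity P δ μ x := fun x => by
    simp only [mollifiedDensity, scaledBump, hdim]
    exact ofReal_integral_le_lintegral_ofReal fun z => mul_nonneg (by positivity) (hP0 _)
  rw [← ENNReal.ofReal_le_ofReal_iff (by positivity)]
  refine (ofReal_integral_integral_mul_mul_le (fun x => integral_nonneg fun z =>
    mul_nonneg (by positivity) (hP0 _)) (fun x y => by positivity) hmoll).trans <|
    (lintegral_lintegral_mollifiedDensity_mul_rpow_neg_le (measurable_of_norm_le_imp_le hPdec)
      hPupp hδ hs.le (by rwa [hdim]) hC hFrost h2δ (Real.rpow_le_one hδ.le hδ1.le hε.le)).trans <|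
    ENNReal.ofReal_le_ofReal ?_
  rw [← Real.rpow_mul hδ.le, neg_mul, mul_neg]
  exact mul_le_mul_of_nonneg_left hsmall (by linarith)

/-- If `μ` is a probability measure on the unit ball of `ℝ^d` with Frostman exponent `s`
at scales `[δ, δ^ε]`, then the `s`-energy at scale `δ` satisfies `I_s^δ(μ) ≤ C δ^{-dε}`. -/
theorem stmt3 (d : ℕ) (hd : 0 < d) (C : ℝ) (hC : 1 ≤ C) (s : ℝ) (hs : 0 < s) (hsd : s < d)
    (ε : ℝ) (hε : 0 < ε) (hε' : ε ≤ 1 / 2)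
    (P : EuclideanSpace ℝ (Fin d) → ℝ)
    (hPdec : ∀ x y : EuclideanSpace ℝ (Fin d), ‖x‖ ≤ ‖y‖ → P y ≤ P x)
    (hPlow : ∀ x, Set.indicator (Metric.closedBall (0 : EuclideanSpace ℝ (Fin d)) (1 / 2)) 1 x ≤ P x)
    (hPupp : ∀ x, P x ≤ Set.indicator (Metric.closedBall (0 : EuclideanSpace ℝ (Fin d)) 1) 1 x) :
    ∃ δ₀ > (0:ℝ), ∀ δ : ℝ, 0 < δ → δ ≤ δ₀ →
      ∀ μ : Measure (EuclideanSpace ℝ (Fin d)), IsProbabilityMeasure μ →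
      μ (Metric.closedBall 0 1)ᶜ = 0 →
      (∀ (x : EuclideanSpace ℝ (Fin d)) (r : ℝ), r ∈ Set.Icc δ (δ ^ ε) →
        μ (Metric.closedBall x r) ≤ ENNReal.ofReal (C * r ^ s)) →
      (∫ x : EuclideanSpace ℝ (Fin d), ∫ y : EuclideanSpace ℝ (Fin d),
          (∫ z, δ ^ (-(d:ℝ)) * P (δ⁻¹ • (x - z)) ∂μ) *
          (∫ z, δ ^ (-(d:ℝ)) * P (δ⁻¹ • (y - z)) ∂μ) * ‖x - y‖ ^ (-s)) ≤
        C * δ ^ (-(d:ℝ) * ε) :=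
  stmt3_general d C hC s hs hsd ε hε hε' P hPdec hPlow hPupp
end

section
/- Let μ, ν be Borel probability measures on ℝ and ξ ∈ ℝ. Then |((μ⊠ν)^)(ξ)| ≤ (‖(μ⊖μ)⊠(ν⊖ν))^(ξ)|)^{1/4}, where ^ denotes the Fourier transform. Equivalently, applying the Cauchy-Schwarz step twice: |(μ⊠ν)^(ξ)|⁴ ≤ ((μ⊖μ)⊠(ν⊖ν))^(ξ). -/
/-!
Since `(μ⊠ν)^(ξ) = ∫ ν^(xξ) dμ(x)` and `(ν⊖ν)^ = |ν^|²`, Jensen's inequality for `‖·‖²` gives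
`|(μ⊠ν)^(ξ)|² ≤ ∫ |ν^(xξ)|² dμ(x) = (μ⊠(ν⊖ν))^(ξ)`. Applying this once more to `(ν⊖ν)⊠μ`, using
that `⊠` is commutative and `Re z ≤ |z|`, squares the bound into the fourth power.
-/

open MeasureTheory

/-- Multiplicative convolution: pushforward of `μ × ν` under `(x, y) ↦ x * y`. -/
noncomputable def mulConv (μ ν : Measure ℝ) : Measure ℝ :=
  Measure.map (fun p : ℝ × ℝ => p.1 * p.2) (μ.prod ν)

/-- Difference (subtractive) convolution: pushforward of `μ × ν` under `(x, y) ↦ x - y`. -/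
noncomputable def subConv (μ ν : Measure ℝ) : Measure ℝ :=
  Measure.map (fun p : ℝ × ℝ => p.1 - p.2) (μ.prod ν)

/-- Fourier transform of a measure: `σ^(ξ) = ∫ e^{-2πiξt} dσ(t)`. -/
noncomputable def ft (σ : Measure ℝ) (ξ : ℝ) : ℂ :=
  ∫ t, Complex.exp (-(2 * Real.pi * ξ * t) * Complex.I) ∂σ

open Complex ComplexConjugate
open scoped Real

lemma norm_integral_sq_le_integral_norm_sq {α E : Type*} [MeasurableSpace α]
    [NormedAddCommGroup E] [NormedSpace ℝ E] [CompleteSpace E]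
    {P : Measure α} [IsProbabilityMeasure P] {f : α → E} (hf : MemLp f 2 P) :
    ‖∫ x, f x ∂P‖ ^ 2 ≤ ∫ x, ‖f x‖ ^ 2 ∂P :=
  (convexOn_univ_norm.pow (fun _ _ ↦ norm_nonneg _) 2).map_integral_le
    (by fun_prop) isClosed_univ (.of_forall fun _ ↦ Set.mem_univ _)
    (hf.integrable one_le_two) hf.integrable_norm_pow'

lemma ft_eq_charFun (σ : Measure ℝ) (ξ : ℝ) : ft σ ξ = charFun σ (-(2 * π * ξ)) := by
  simp only [ft, charFun_apply_real]
  congr with t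
  push_cast
  ring_nf

lemma mulConv_comm (μ ν : Measure ℝ) [SFinite μ] [SFinite ν] : mulConv μ ν = mulConv ν μ := by
  rw [mulConv, mulConv, ← Measure.prod_swap, Measure.map_map (by fun_prop) measurable_swap]
  simp only [Function.comp_def, Prod.fst_swap, Prod.snd_swap, mul_comm]

lemma charFun_mulConv (μ ν : Measure ℝ) [IsFiniteMeasure μ] [IsFiniteMeasure ν] (t : ℝ) :
    charFun (mulConv μ ν) t = ∫ x, charFun ν (x * t) ∂μ := by
  rw [mulConv, charFun_apply_real, integral_map (by fun_prop) (by fun_prop), integral_prod]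
  · simp only [charFun_apply_real]
    congr with x
    congr with y
    push_cast
    ring_nf
  · exact (integrable_const (1 : ℝ)).mono (by fun_prop) (.of_forall fun p ↦ by
      rw [← ofReal_mul, norm_exp_ofReal_mul_I, norm_one])

lemma charFun_subConv (μ ν : Measure ℝ) [IsFiniteMeasure μ] [IsFiniteMeasure ν] (t : ℝ) :
    charFun (subConv μ ν) t = charFun μ t * conj (charFun ν t) := by
  rw [subConv, charFun_apply_real, integral_map (by fun_prop) (by fun_prop), charFun_apply_real,
    charFun_apply_real, ← integral_conj, ← integral_prod_mul]
  congr with p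
  rw [← exp_conj, ← exp_add]
  congr 1
  simp only [map_mul, conj_ofReal, conj_I]
  push_cast
  ring

instance isFiniteMeasure_subConv (μ ν : Measure ℝ) [IsFiniteMeasure μ] [IsFiniteMeasure ν] :
    IsFiniteMeasure (subConv μ ν) := by
  unfold subConv
  infer_instance

instance isProbabilityMeasure_subConv (μ ν : Measure ℝ) [IsProbabilityMeasure μ]
    [IsProbabilityMeasure ν] :
    IsProbabilityMeasure (subConv μ ν) :=
  Measure.isProbabilityMeasure_map (by fun_prop)

lemma charFun_mulConv_subConv_self (μ ν : Measure ℝ) [IsFiniteMeasure μ] [IsFiniteMeasure ν]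
    (t : ℝ) :
    charFun (mulConv μ (subConv ν ν)) t = ((∫ x, ‖charFun ν (x * t)‖ ^ 2 ∂μ : ℝ) : ℂ) := by
  rw [charFun_mulConv, ← integral_complex_ofReal]
  congr with x
  rw [charFun_subConv, mul_conj, normSq_eq_norm_sq]

lemma sq_norm_charFun_mulConv_le (μ ν : Measure ℝ) [IsProbabilityMeasure μ]
    [IsProbabilityMeasure ν] (t : ℝ) :
    ‖charFun (mulConv μ ν) t‖ ^ 2 ≤ (charFun (mulConv μ (subConv ν ν)) t).re := by
  rw [charFun_mulConv_subConv_self, ofReal_re, charFun_mulConv]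
  exact norm_integral_sq_le_integral_norm_sq
    (.of_bound (by fun_prop) 1 (.of_forall fun _ ↦ norm_charFun_le_one _))

/-- `|(μ⊠ν)^(ξ)|⁴ ≤ ((μ⊖μ)⊠(ν⊖ν))^(ξ)` (the right-hand side being real and nonnegative). -/
theorem stmt7 (μ ν : Measure ℝ) [IsProbabilityMeasure μ] [IsProbabilityMeasure ν] (ξ : ℝ) :
    ‖ft (mulConv μ ν) ξ‖ ^ 4 ≤ (ft (mulConv (subConv μ μ) (subConv ν ν)) ξ).re := by
  rw [ft_eq_charFun, ft_eq_charFun]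
  set t := -(2 * π * ξ)
  have hμν := sq_norm_charFun_mulConv_le μ ν t
  have hνμ := sq_norm_charFun_mulConv_le (subConv ν ν) μ t
  rw [mulConv_comm (subConv ν ν) μ, mulConv_comm (subConv ν ν) (subConv μ μ)] at hνμ
  set z := charFun (mulConv μ (subConv ν ν)) t
  calc ‖charFun (mulConv μ ν) t‖ ^ 4 = (‖charFun (mulConv μ ν) t‖ ^ 2) ^ 2 := by ring
    _ ≤ z.re ^ 2 := pow_le_pow_left₀ (by positivity) hμν 2
    _ ≤ ‖z‖ ^ 2 := pow_le_pow_left₀ (hμν.trans' (by positivity)) (re_le_norm z) 2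
    _ ≤ _ := hνμ
end

section
/- For every s ∈ (0,1/2) and every δ₀ > 0 there exist δ ∈ (0,δ₀] and a Borel probability measure μ on [1,2] such that ‖μ‖₂² is comparable to δ^{s-1} (μ is absolutely continuous with L² density) and |(μ⊠μ⊠μ)^(δ^{-1})| ≥ 1/2. In particular, a single-scale L² bound ‖μ_δ‖₂² ≤ δ^{s-1} does not imply power Fourier decay of the triple multiplicative convolution. -/
open MeasureTheory

/-- Triple multiplicative convolution `μ⊠μ⊠μ`. -/
noncomputable def tripleMulConv (μ : Measure ℝ) : Measure ℝ :=
  Measure.map (fun p : ℝ × ℝ × ℝ => p.1 * p.2.1 * p.2.2) (μ.prod (μ.prod μ))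

/-!
Take `M ∈ ℕ` large, `δ = 1 / M`, and let `μ` be uniform on the union of the `K = ⌈M ^ s⌉`
intervals `[1 + j / M, 1 + (j + 1 / 32) / M)`, `j < K`; then `‖μ‖₂² = 32 M / K ≍ δ ^ (s - 1)`.
For `x, y, z` in these intervals, expanding `M x y z` shows that it lies within
`3 / 32 + 4 K² / M` of the integer `M + j + k + l`, which is below `1 / 6` once `64 K² ≤ M`;
this holds for large `M` precisely because `s < 1 / 2`. So `cos (2π M x y z) ≥ 1 / 2` on the
support of `μ ⊗ μ ⊗ μ`, and the real part of `(μ⊠μ⊠μ)^(M)` is at least `1 / 2`.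
-/

open Real Set Filter

lemma re_ft (σ : Measure ℝ) [IsFiniteMeasure σ] (ξ : ℝ) :
    (ft σ ξ).re = ∫ t, cos (2 * π * ξ * t) ∂σ := by
  have harg (t : ℝ) : -(2 * (π : ℂ) * ξ * t) * Complex.I =
      ((-(2 * π * ξ * t) : ℝ) : ℂ) * Complex.I := by
    push_cast; ring
  have hint : Integrable (fun t : ℝ => Complex.exp (-(2 * (π : ℂ) * ξ * t) * Complex.I)) σ :=
    .of_bound (by fun_prop) 1 (ae_of_all _ fun t => by rw [harg, Complex.norm_exp_ofReal_mul_I])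
  rw [ft, ← RCLike.re_to_complex, ← integral_re hint]
  simp_rw [RCLike.re_to_complex, harg, Complex.exp_ofReal_mul_I_re, cos_neg]

lemma le_norm_ft_of_ae_le_cos {σ : Measure ℝ} [IsProbabilityMeasure σ] {ξ a : ℝ}
    (h : ∀ᵐ t ∂σ, a ≤ cos (2 * π * ξ * t)) : a ≤ ‖ft σ ξ‖ :=
  calc a = ∫ _t, a ∂σ := by simp
    _ ≤ ∫ t, cos (2 * π * ξ * t) ∂σ :=
      integral_mono_ae (integrable_const a)
        (.of_bound (by fun_prop) 1 (ae_of_all _ fun t => abs_cos_le_one _)) h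
    _ = (ft σ ξ).re := (re_ft σ ξ).symm
    _ ≤ ‖ft σ ξ‖ := Complex.re_le_norm _

instance {μ : Measure ℝ} [IsProbabilityMeasure μ] : IsProbabilityMeasure (tripleMulConv μ) :=
  Measure.isProbabilityMeasure_map (by fun_prop)

lemma ae_tripleMulConv {μ : Measure ℝ} [SFinite μ] {S : Set ℝ} {p : ℝ → Prop}
    (hp : MeasurableSet {t | p t}) (hS : ∀ᵐ x ∂μ, x ∈ S)
    (h : ∀ x ∈ S, ∀ y ∈ S, ∀ z ∈ S, p (x * y * z)) : ∀ᵐ t ∂tripleMulConv μ, p t := by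
  rw [tripleMulConv, ae_map_iff (by fun_prop) hp]
  have h₁ := (Measure.quasiMeasurePreserving_fst (ν := μ.prod μ)).ae hS
  have h₂ := (Measure.quasiMeasurePreserving_snd (μ := μ)).ae
    ((Measure.quasiMeasurePreserving_fst (ν := μ)).ae hS)
  have h₃ := (Measure.quasiMeasurePreserving_snd (μ := μ)).ae
    ((Measure.quasiMeasurePreserving_snd (μ := μ)).ae hS)
  filter_upwards [h₁, h₂, h₃] with q hx hy hz using h _ hx _ hy _ hz

section UniformDensity

variable {α : Type*} [MeasurableSpace α] {ν : Measure α} {S : Set α} {v : ℝ}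

lemma withDensity_ofReal_indicator_const_apply (hS : MeasurableSet S) (c : ℝ) {T : Set α}
    (hT : MeasurableSet T) :
    ν.withDensity (fun x => ENNReal.ofReal (S.indicator (fun _ => c) x)) T =
      ENNReal.ofReal c * ν (S ∩ T) := by
  rw [Set.comp_indicator_const c ENNReal.ofReal ENNReal.ofReal_zero, withDensity_apply _ hT,
    lintegral_indicator hS, setLIntegral_const, Measure.restrict_apply hS, Set.inter_comm]

lemma isProbabilityMeasure_withDensity_indicator_inv (hS : MeasurableSet S) (hv : 0 < v)
    (hvol : ν S = ENNReal.ofReal v) :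
    IsProbabilityMeasure
      (ν.withDensity fun x => ENNReal.ofReal (S.indicator (fun _ => v⁻¹) x)) := by
  constructor
  rw [withDensity_ofReal_indicator_const_apply hS _ .univ, Set.inter_univ, hvol,
    ← ENNReal.ofReal_mul (inv_nonneg.2 hv.le), inv_mul_cancel₀ hv.ne', ENNReal.ofReal_one]

lemma withDensity_ofReal_indicator_compl (hS : MeasurableSet S) (c : ℝ) :
    ν.withDensity (fun x => ENNReal.ofReal (S.indicator (fun _ => c) x)) Sᶜ = 0 := by
  rw [withDensity_ofReal_indicator_const_apply hS c hS.compl, Set.inter_compl_self,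
    measure_empty, mul_zero]

lemma integral_indicator_inv_sq (hS : MeasurableSet S) (hv : 0 < v)
    (hvol : ν S = ENNReal.ofReal v) :
    ∫ x, S.indicator (fun _ => v⁻¹) x ^ 2 ∂ν = v⁻¹ := by
  rw [Set.comp_indicator_const v⁻¹ (· ^ 2) (zero_pow two_ne_zero),
    integral_indicator_const _ hS, measureReal_def, hvol, ENNReal.toReal_ofReal hv.le,
    smul_eq_mul, sq, ← mul_assoc, mul_inv_cancel₀ hv.ne', one_mul]

end UniformDensity

lemma half_le_cos_two_pi_mul {θ : ℝ} (n : ℤ) (h : |θ - n| ≤ 1 / 6) :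
    1 / 2 ≤ cos (2 * π * θ) := by
  have hπ := pi_pos
  have habs : |2 * π * (θ - n)| ≤ π / 3 := by
    rw [abs_mul, abs_of_pos (by positivity : 0 < 2 * π)]
    nlinarith
  calc 1 / 2 = cos (π / 3) := cos_pi_div_three.symm
    _ ≤ cos |2 * π * (θ - n)| :=
      cos_le_cos_of_nonneg_of_le_pi (abs_nonneg _) (by linarith) habs
    _ = cos (2 * π * θ) := by
      rw [cos_abs, ← cos_sub_int_mul_two_pi (2 * π * θ) n]; ring_nf

lemma mul_prod_one_add_div_sub_mem_Icc {M K p q r : ℝ} (hM : 0 < M) (hKM : K ≤ M)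
    (hp : p ∈ Icc 0 K) (hq : q ∈ Icc 0 K) (hr : r ∈ Icc 0 K) :
    M * ((1 + p / M) * (1 + q / M) * (1 + r / M)) - (M + p + q + r) ∈
      Icc 0 (4 * K ^ 2 / M) := by
  obtain ⟨hp₀, hpK⟩ := hp
  obtain ⟨hq₀, hqK⟩ := hq
  obtain ⟨hr₀, hrK⟩ := hr
  have hexp : M * ((1 + p / M) * (1 + q / M) * (1 + r / M)) - (M + p + q + r) =
      (p * q + q * r + r * p + p * q * r / M) / M := by
    field_simp; ring
  have hpq : p * q ≤ K ^ 2 := by nlinarith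
  have hqr : q * r ≤ K ^ 2 := by nlinarith
  have hrp : r * p ≤ K ^ 2 := by nlinarith
  have hpqr : p * q * r / M ≤ K ^ 2 := by
    rw [div_le_iff₀ hM]
    have : r ≤ M := hrK.trans hKM
    nlinarith [mul_nonneg hp₀ hq₀]
  rw [hexp]
  exact ⟨by positivity, div_le_div_of_nonneg_right (by linarith) hM.le⟩

def combSet (M K : ℕ) : Set ℝ :=
  ⋃ j ∈ Finset.range K, Ico (1 + j / M) (1 + (j + 1 / 32) / M)

section Comb

variable {M K : ℕ}

lemma measurableSet_combSet : MeasurableSet (combSet M K) :=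
  (Finset.range K).measurableSet_biUnion fun _ _ => measurableSet_Ico

lemma volume_combSet (hM : 0 < M) : volume (combSet M K) = ENNReal.ofReal (K / (32 * M)) := by
  have hM' : (0 : ℝ) < M := Nat.cast_pos.2 hM
  have hdisj : (Finset.range K : Set ℕ).PairwiseDisjoint
      fun j : ℕ => Ico (1 + j / M : ℝ) (1 + (j + 1 / 32) / M) := by
    intro i hi j hj hij
    wlog hlt : i < j generalizing i j
    · exact (this hj hi hij.symm (hij.lt_or_gt.resolve_left hlt)).symm
    have hle : (i : ℝ) + 1 / 32 ≤ j := by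
      have : (i : ℝ) + 1 ≤ j := by exact_mod_cast hlt
      linarith
    refine Set.disjoint_left.2 fun x hxi hxj => ?_
    have : (1 + (i + 1 / 32) / M : ℝ) ≤ 1 + j / M := by gcongr
    exact (lt_irrefl x) (hxi.2.trans_le (this.trans hxj.1))
  rw [combSet, measure_biUnion_finset hdisj fun _ _ => measurableSet_Ico]
  have hlen (j : ℕ) : volume (Ico (1 + j / M : ℝ) (1 + (j + 1 / 32) / M)) =
      ENNReal.ofReal (1 / (32 * M)) := by
    rw [Real.volume_Ico]; congr 1; field_simp; ring
  rw [Finset.sum_congr rfl fun j _ => hlen j, Finset.sum_const, Finset.card_range, nsmul_eq_mul,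
    ← ENNReal.ofReal_natCast, ← ENNReal.ofReal_mul (Nat.cast_nonneg K)]
  congr 1
  field_simp

lemma exists_eq_of_mem_combSet (hM : 0 < M) {x : ℝ} (hx : x ∈ combSet M K) :
    ∃ j : ℕ, j < K ∧ ∃ a ∈ Ico (0 : ℝ) (1 / 32), x = 1 + (j + a) / M := by
  have hM' : (0 : ℝ) < M := Nat.cast_pos.2 hM
  simp only [combSet, mem_iUnion, Finset.mem_range, mem_Ico] at hx
  obtain ⟨j, hj, hx₁, hx₂⟩ := hx
  refine ⟨j, hj, M * (x - 1) - j, ⟨?_, ?_⟩, by field_simp; ring⟩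
  · rw [sub_nonneg, ← div_le_iff₀' hM']; linarith
  · rw [sub_lt_iff_lt_add', ← lt_div_iff₀' hM']; linarith

lemma mem_Icc_of_mem_combSet (hM : 0 < M) (hKM : K ≤ M) {x : ℝ} (hx : x ∈ combSet M K) :
    x ∈ Icc 1 2 := by
  obtain ⟨j, hj, a, ⟨ha₀, ha₁⟩, rfl⟩ := exists_eq_of_mem_combSet hM hx
  have hM' : (0 : ℝ) < M := Nat.cast_pos.2 hM
  have hjK : (j : ℝ) + 1 ≤ K := by exact_mod_cast hj
  have hKM' : (K : ℝ) ≤ M := by exact_mod_cast hKM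
  constructor
  · have : 0 ≤ (j + a) / M := by positivity
    linarith
  · have : (j + a) / M ≤ 1 := (div_le_one hM').2 (by linarith)
    linarith

lemma half_le_cos_of_mem_combSet (hM : 0 < M) (hKM : 64 * K ^ 2 ≤ M) {x y z : ℝ}
    (hx : x ∈ combSet M K) (hy : y ∈ combSet M K) (hz : z ∈ combSet M K) :
    1 / 2 ≤ cos (2 * π * M * (x * y * z)) := by
  have hM' : (0 : ℝ) < M := Nat.cast_pos.2 hM
  have hKM' : 64 * (K : ℝ) ^ 2 ≤ M := by exact_mod_cast hKM
  have hKle : (K : ℝ) ≤ M := by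
    have : (K : ℝ) ≤ K ^ 2 := by exact_mod_cast Nat.le_self_pow two_ne_zero K
    nlinarith
  have hoffset {j : ℕ} (hj : j < K) {a : ℝ} (ha : a ∈ Ico (0 : ℝ) (1 / 32)) :
      (j : ℝ) + a ∈ Icc 0 (K : ℝ) := by
    have : (j : ℝ) + 1 ≤ K := by exact_mod_cast hj
    exact ⟨by linarith [ha.1, (Nat.cast_nonneg j : (0 : ℝ) ≤ j)], by linarith [ha.2]⟩
  obtain ⟨j, hj, a, ha, rfl⟩ := exists_eq_of_mem_combSet hM hx
  obtain ⟨k, hk, b, hb, rfl⟩ := exists_eq_of_mem_combSet hM hy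
  obtain ⟨l, hl, c, hc, rfl⟩ := exists_eq_of_mem_combSet hM hz
  obtain ⟨hcross₀, hcross₁⟩ := mul_prod_one_add_div_sub_mem_Icc hM' hKle
    (hoffset hj ha) (hoffset hk hb) (hoffset hl hc)
  have hsmall : 4 * (K : ℝ) ^ 2 / M ≤ 1 / 16 := by
    rw [div_le_iff₀ hM']; linarith
  rw [mul_assoc (2 * π)]
  refine half_le_cos_two_pi_mul (M + j + k + l) (abs_le.2 ⟨?_, ?_⟩) <;>
    push_cast at hcross₀ hcross₁ ⊢ <;>
    linarith [ha.1, ha.2, hb.1, hb.2, hc.1, hc.2]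

end Comb

lemma exists_nat_inv_le_and_le_rpow {ε δ₀ : ℝ} (hε : 0 < ε) (hδ₀ : 0 < δ₀) (A : ℝ) :
    ∃ M : ℕ, 0 < M ∧ (M : ℝ)⁻¹ ≤ δ₀ ∧ A ≤ (M : ℝ) ^ ε := by
  have hinv := (tendsto_inv_atTop_zero.comp tendsto_natCast_atTop_atTop).eventually
    (ge_mem_nhds hδ₀)
  have hpow := ((tendsto_rpow_atTop hε).comp tendsto_natCast_atTop_atTop).eventually
    (eventually_ge_atTop A)
  exact ((eventually_gt_atTop 0).and (hinv.and hpow)).exists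

lemma exists_nat_inv_le_and_sq_natCeil_rpow_le {s δ₀ : ℝ} (hs : 0 < s) (hs₂ : s < 1 / 2)
    (hδ₀ : 0 < δ₀) : ∃ M : ℕ, 0 < M ∧ (M : ℝ)⁻¹ ≤ δ₀ ∧ 64 * ⌈(M : ℝ) ^ s⌉₊ ^ 2 ≤ M := by
  obtain ⟨M, hM, hMδ₀, hMlarge⟩ :=
    exists_nat_inv_le_and_le_rpow (by linarith : 0 < 1 - 2 * s) hδ₀ 256
  refine ⟨M, hM, hMδ₀, ?_⟩
  have hM₀ : (0 : ℝ) < M := by exact_mod_cast hM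
  have hX₁ : 1 ≤ (M : ℝ) ^ s := one_le_rpow (by exact_mod_cast hM) hs.le
  have hKX : (⌈(M : ℝ) ^ s⌉₊ : ℝ) ≤ 2 * (M : ℝ) ^ s := Nat.ceil_le_two_mul (by linarith)
  have : 64 * (⌈(M : ℝ) ^ s⌉₊ : ℝ) ^ 2 ≤ M :=
    calc 64 * (⌈(M : ℝ) ^ s⌉₊ : ℝ) ^ 2 ≤ 64 * (2 * (M : ℝ) ^ s) ^ 2 := by gcongr
      _ = 256 * ((M : ℝ) ^ s * (M : ℝ) ^ s) := by ring
      _ ≤ (M : ℝ) ^ (1 - 2 * s) * ((M : ℝ) ^ s * (M : ℝ) ^ s) := by gcongr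
      _ = (M : ℝ) ^ (1 - 2 * s + s + s) := by rw [rpow_add hM₀, rpow_add hM₀]; ring
      _ = M := by rw [show 1 - 2 * s + s + s = 1 by ring, rpow_one]
  exact_mod_cast this

lemma div_natCeil_rpow_mem_Icc {M s : ℝ} (hM : 1 ≤ M) (hs : 0 ≤ s) :
    M / ⌈M ^ s⌉₊ ∈ Icc (M⁻¹ ^ (s - 1) / 2) (M⁻¹ ^ (s - 1)) := by
  have hX₁ : 1 ≤ M ^ s := one_le_rpow hM hs
  have hXK : M ^ s ≤ ⌈M ^ s⌉₊ := Nat.le_ceil _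
  have hKX : (⌈M ^ s⌉₊ : ℝ) ≤ 2 * M ^ s := Nat.ceil_le_two_mul (by linarith)
  rw [inv_rpow (by linarith), ← rpow_neg (by linarith), neg_sub, rpow_sub (by linarith),
    rpow_one, div_div]
  exact ⟨div_le_div_of_nonneg_left (by linarith) (by linarith) (by linarith),
    div_le_div_of_nonneg_left (by linarith) (by linarith) hXK⟩

/-- For every `s ∈ (0,1/2)` and `δ₀ > 0` there are `δ ∈ (0,δ₀]` and a probability measure `μ`
on `[1,2]`, absolutely continuous with density `f` satisfying `‖f‖₂² ∼ δ^{s-1}`, while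
`|(μ⊠μ⊠μ)^(δ⁻¹)| ≥ 1/2`: the single-scale `L²` bound does not imply Fourier decay. -/
theorem stmt8 :
    ∃ C ≥ (1:ℝ), ∀ s : ℝ, 0 < s → s < 1 / 2 → ∀ δ₀ > (0:ℝ),
      ∃ δ : ℝ, δ ∈ Set.Ioc (0:ℝ) δ₀ ∧
      ∃ (μ : Measure ℝ) (f : ℝ → ℝ), IsProbabilityMeasure μ ∧
        μ (Set.Icc (1:ℝ) 2)ᶜ = 0 ∧
        μ = volume.withDensity (fun x => ENNReal.ofReal (f x)) ∧
        C⁻¹ * δ ^ (s - 1) ≤ (∫ x : ℝ, f x ^ 2) ∧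
        (∫ x : ℝ, f x ^ 2) ≤ C * δ ^ (s - 1) ∧
        1 / 2 ≤ ‖ft (tripleMulConv μ) δ⁻¹‖ := by
  refine ⟨32, by norm_num, fun s hs hs₂ δ₀ hδ₀ => ?_⟩
  obtain ⟨M, hM, hMδ₀, hKM⟩ := exists_nat_inv_le_and_sq_natCeil_rpow_le hs hs₂ hδ₀
  set K := ⌈(M : ℝ) ^ s⌉₊
  obtain ⟨hlow, hup⟩ := div_natCeil_rpow_mem_Icc (by exact_mod_cast hM : (1 : ℝ) ≤ M) hs.le
  have hδpow : 0 ≤ (M : ℝ)⁻¹ ^ (s - 1) := by positivity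
  set v : ℝ := K / (32 * M)
  have hv : 0 < v := by positivity
  have hS : MeasurableSet (combSet M K) := measurableSet_combSet
  have hvol : volume (combSet M K) = ENNReal.ofReal v := volume_combSet hM
  have hnull := withDensity_ofReal_indicator_compl (ν := volume) hS v⁻¹
  have hL2 : ∫ x, (combSet M K).indicator (fun _ => v⁻¹) x ^ 2 = 32 * (M / K) := by
    rw [integral_indicator_inv_sq hS hv hvol, inv_div, mul_div_assoc]
  have hprob := isProbabilityMeasure_withDensity_indicator_inv hS hv hvol
  refine ⟨(M : ℝ)⁻¹, ⟨by positivity, hMδ₀⟩, _, _, hprob, ?_, rfl, ?_, ?_, ?_⟩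
  · refine measure_mono_null (compl_subset_compl.2 fun x hx => ?_) hnull
    exact mem_Icc_of_mem_combSet hM (le_trans (by nlinarith) hKM) hx
  · rw [hL2]; linarith
  · rw [hL2]; linarith
  · rw [inv_inv]
    exact le_norm_ft_of_ae_le_cos (ae_tripleMulConv (measurableSet_le measurable_const
      (by fun_prop)) (mem_ae_iff.2 hnull) fun x hx y hy z hz =>
        half_le_cos_of_mem_combSet hM hKM hx hy hz)
end

section
/- Let 0 < s < 2/3, let c > 0 be small enough (absolute), δ ∈ (0,1], and let μ be the normalized Lebesgue measure on [0, c·δ^{1-s}], i.e. μ = (c δ^{1-s})^{-1}·Leb|_{[0,cδ^{1-s}]}. Then μ satisfies ‖μ‖₂² = c^{-1}δ^{s-1}, the triple multiplicative convolution μ⊠μ⊠μ is supported on [0, c³δ^{3-3s}] ⊆ [0, cδ], and consequently |(μ⊠μ⊠μ)^(δ^{-1})| ≥ 1/2. -/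
open MeasureTheory

/-! The normalized Lebesgue measure on `[0, a]` is `volume[|Icc 0 a]`, whose density is
`a⁻¹ 𝟙_[0,a]`; this gives the `L²` norm. A product of three points of `[0, a]` lies in
`[0, a³]`, and `a³ = c³ δ^{3-3s} ≤ c δ` because `3 - 3s ≥ 1`. Finally, on the support of a
probability measure carried by `[0, cδ]` the phase `2π δ⁻¹ t` stays in `[0, 2πc] ⊆ [0, π/3]`,
so the real part of its Fourier transform at `δ⁻¹` is at least `cos (π/3) = 1/2`. -/

open ProbabilityTheory Set Real

section Cond

variable {α : Type*} [MeasurableSpace α] (ν : Measure α) [SigmaFinite ν] {s : Set α}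

lemma rnDeriv_cond_ae_eq (hs : MeasurableSet s) (hν : ν s ≠ 0) :
    (ν[|s]).rnDeriv ν =ᵐ[ν] s.indicator fun _ ↦ (ν s)⁻¹ := by
  filter_upwards [Measure.rnDeriv_smul_left_of_ne_top' (ν.restrict s) ν (ENNReal.inv_ne_top.2 hν),
    Measure.rnDeriv_restrict_self ν hs] with x hsmul hrestrict
  rw [ProbabilityTheory.cond, hsmul, Pi.smul_apply, hrestrict]
  by_cases hx : x ∈ s <;> simp [hx]

lemma integral_rnDeriv_cond_sq (hs : MeasurableSet s) (hν : ν s ≠ 0) (hν' : ν s ≠ ⊤) :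
    ∫ x, ((ν[|s]).rnDeriv ν x).toReal ^ 2 ∂ν = (ν.real s)⁻¹ := by
  have hpos : ν.real s ≠ 0 := (measureReal_ne_zero_iff hν').2 hν
  calc ∫ x, ((ν[|s]).rnDeriv ν x).toReal ^ 2 ∂ν
      = ∫ x, s.indicator (fun _ ↦ (ν.real s)⁻¹ ^ 2) x ∂ν := by
        refine integral_congr_ae ?_
        filter_upwards [rnDeriv_cond_ae_eq ν hs hν] with x hx
        rw [hx]
        by_cases hxs : x ∈ s <;> simp [hxs, measureReal_def]
    _ = (ν.real s)⁻¹ := by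
        rw [integral_indicator hs, setIntegral_const, smul_eq_mul]
        field_simp

end Cond

instance tripleMulConv.isProbabilityMeasure (μ : Measure ℝ) [IsProbabilityMeasure μ] :
    IsProbabilityMeasure (tripleMulConv μ) :=
  Measure.isProbabilityMeasure_map (by fun_prop)

lemma ae_tripleMulConv_mem_Icc {μ : Measure ℝ} [SFinite μ] {a : ℝ}
    (hμ : ∀ᵐ x ∂μ, x ∈ Icc 0 a) : ∀ᵐ t ∂tripleMulConv μ, t ∈ Icc 0 (a ^ 3) := by
  have hprod : ∀ᵐ p ∂μ.prod (μ.prod μ), p.1 ∈ Icc 0 a ∧ p.2.1 ∈ Icc 0 a ∧ p.2.2 ∈ Icc 0 a :=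
    (Measure.quasiMeasurePreserving_fst.ae hμ).and <|
      Measure.quasiMeasurePreserving_snd.ae <|
        (Measure.quasiMeasurePreserving_fst.ae hμ).and (Measure.quasiMeasurePreserving_snd.ae hμ)
  refine (ae_map_iff (by fun_prop) measurableSet_Icc).2 ?_
  filter_upwards [hprod] with p ⟨⟨hx0, hxa⟩, ⟨hy0, hya⟩, hz0, hza⟩
  have ha : 0 ≤ a := hx0.trans hxa
  refine ⟨by positivity, ?_⟩
  calc p.1 * p.2.1 * p.2.2 ≤ a * a * a := by gcongr
    _ = a ^ 3 := by ring

lemma cos_le_re_integral_exp {σ : Measure ℝ} [IsProbabilityMeasure σ] {ξ c : ℝ} (hc : c ≤ 1 / 2)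
    (hσ : ∀ᵐ t ∂σ, 0 ≤ ξ * t ∧ ξ * t ≤ c) :
    cos (2 * π * c) ≤ (ft σ ξ).re := by
  have hre : ∀ t : ℝ, (Complex.exp (-(2 * π * ξ * t) * Complex.I)).re = cos (2 * π * ξ * t) := by
    intro t
    simp [Complex.exp_re, Real.cos_neg]
  have hint : Integrable (fun t : ℝ ↦ Complex.exp (-(2 * π * ξ * t) * Complex.I)) σ :=
    Integrable.of_bound (by fun_prop) 1 (ae_of_all _ fun t ↦ by simp [Complex.norm_exp])
  rw [ft, ← RCLike.re_to_complex, ← integral_re hint]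
  simp only [RCLike.re_to_complex, hre]
  calc cos (2 * π * c) = ∫ _, cos (2 * π * c) ∂σ := by simp
    _ ≤ ∫ t, cos (2 * π * ξ * t) ∂σ := by
      refine integral_mono_ae (integrable_const _)
        (Integrable.of_bound (by fun_prop) 1 (ae_of_all _ fun t ↦ abs_cos_le_one _)) ?_
      filter_upwards [hσ] with t ⟨ht0, htc⟩
      rw [mul_assoc (2 * π)]
      exact cos_le_cos_of_nonneg_of_le_pi (mul_nonneg (by positivity) ht0)
        (by nlinarith [pi_pos]) (by gcongr)

lemma half_le_norm_ft_inv {σ : Measure ℝ} [IsProbabilityMeasure σ] {δ c : ℝ} (hδ : 0 < δ)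
    (hc0 : 0 ≤ c) (hc : c ≤ 1 / 6) (hσ : ∀ᵐ t ∂σ, t ∈ Icc 0 (c * δ)) :
    1 / 2 ≤ ‖ft σ δ⁻¹‖ := by
  have hσ' : ∀ᵐ t ∂σ, 0 ≤ δ⁻¹ * t ∧ δ⁻¹ * t ≤ c := by
    filter_upwards [hσ] with t ⟨ht0, htc⟩
    refine ⟨by positivity, ?_⟩
    rwa [inv_mul_le_iff₀ hδ, mul_comm]
  calc (1 : ℝ) / 2 = cos (2 * π * (1 / 6)) := by rw [← cos_pi_div_three]; ring_nf
    _ ≤ cos (2 * π * c) :=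
      cos_le_cos_of_nonneg_of_le_pi (mul_nonneg (by positivity) hc0) (by linarith [pi_pos])
        (by gcongr)
    _ ≤ (ft σ δ⁻¹).re := cos_le_re_integral_exp (by linarith) hσ'
    _ ≤ ‖ft σ δ⁻¹‖ := Complex.re_le_norm _

/-- For `0 < s < 2/3`, `c` small (absolute) and `μ` the normalized Lebesgue measure on
`[0, c δ^{1-s}]`: `‖μ‖₂² = c⁻¹ δ^{s-1}`, `μ⊠μ⊠μ` is supported on
`[0, c³δ^{3-3s}] ⊆ [0, cδ]`, and `|(μ⊠μ⊠μ)^(δ⁻¹)| ≥ 1/2`. -/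
theorem stmt9 :
    ∃ c₀ > (0:ℝ), ∀ c : ℝ, 0 < c → c ≤ c₀ → ∀ s : ℝ, 0 < s → s < 2 / 3 →
      ∀ δ : ℝ, δ ∈ Set.Ioc (0:ℝ) 1 →
      ∀ μ : Measure ℝ,
        μ = (ENNReal.ofReal (c * δ ^ ((1:ℝ) - s)))⁻¹ •
              volume.restrict (Set.Icc 0 (c * δ ^ ((1:ℝ) - s))) →
        (∫ x : ℝ, ((μ.rnDeriv volume x).toReal) ^ 2) = c⁻¹ * δ ^ (s - 1) ∧
        tripleMulConv μ (Set.Icc (0:ℝ) (c ^ 3 * δ ^ (3 - 3 * s)))ᶜ = 0 ∧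
        Set.Icc (0:ℝ) (c ^ 3 * δ ^ (3 - 3 * s)) ⊆ Set.Icc (0:ℝ) (c * δ) ∧
        1 / 2 ≤ ‖ft (tripleMulConv μ) δ⁻¹‖ := by
  refine ⟨1 / 6, by norm_num, fun c hc hc₀ s _ hs δ ⟨hδ0, hδ1⟩ μ hμ => ?_⟩
  set a := c * δ ^ ((1:ℝ) - s)
  have ha : 0 < a := by positivity
  have hμ_cond : μ = volume[|Icc 0 a] := by
    rw [hμ, ProbabilityTheory.cond, Real.volume_Icc, sub_zero]
  have hvol : volume (Icc 0 a) ≠ 0 := by simp [ha]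
  have : IsProbabilityMeasure μ :=
    hμ_cond ▸ cond_isProbabilityMeasure_of_finite hvol measure_Icc_lt_top.ne
  have ha3 : a ^ 3 = c ^ 3 * δ ^ (3 - 3 * s) := by
    rw [mul_pow, ← Real.rpow_mul_natCast hδ0.le]
    norm_num [mul_sub, sub_mul, mul_comm]
  have hsupport : ∀ᵐ t ∂tripleMulConv μ, t ∈ Icc 0 (c ^ 3 * δ ^ (3 - 3 * s)) :=
    ha3 ▸ ae_tripleMulConv_mem_Icc (hμ_cond ▸ ae_cond_mem measurableSet_Icc)
  have hsubset : Icc 0 (c ^ 3 * δ ^ (3 - 3 * s)) ⊆ Icc 0 (c * δ) := by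
    refine Icc_subset_Icc le_rfl (mul_le_mul ?_ ?_ (by positivity) hc.le)
    · exact pow_le_of_le_one hc.le (by linarith) (by norm_num)
    · simpa using Real.rpow_le_rpow_of_exponent_ge hδ0 hδ1 (show 1 ≤ 3 - 3 * s by linarith)
  refine ⟨?_, ae_iff.1 hsupport, hsubset, half_le_norm_ft_inv hδ0 hc.le hc₀ ?_⟩
  · rw [hμ_cond, integral_rnDeriv_cond_sq volume measurableSet_Icc hvol measure_Icc_lt_top.ne,
      Real.volume_real_Icc_of_le ha.le, sub_zero, mul_inv, ← Real.rpow_neg hδ0.le, neg_sub]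
  · filter_upwards [hsupport] with t ht using hsubset ht
end
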